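/- arXiv:0908.2256 — 3 statements merged into one kernel-verified Lean document; each statement's English description precedes it below -/
import Mathlib

section
/- Let S be a random subset of [n] drawn from a product distribution (each item i included independently with probability x_i ∈ [0,1]), and let Alt : 2^{[n]} → 2^{[n]} be a deterministic alteration map with Alt(T) ⊆ T for all T, defining S' = Alt(S). Suppose that for some β ∈ [0,1]: (i) for every i ∈ [n], Pr[i ∈ S' | i ∈ S] ≥ β; and (ii) for all T_1 ⊆ T_2 ⊆ [n] and i ∈ T_1, if i ∈ Alt(T_2) then i ∈ Alt(T_1). Then for every monotone submodular function f : 2^{[n]} → ℝ_{≥0}: E[f(S')] ≥ β · E[f(S)]. -/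
open Finset
open scoped Classical BigOperators

/-- Probability of the subset `T` under the product distribution on subsets of
`Fin n` with marginal probabilities `q`. -/
noncomputable def prodP {n : ℕ} (q : Fin n → ℝ) (T : Finset (Fin n)) : ℝ :=
  (∏ i ∈ T, q i) * ∏ i ∈ Tᶜ, (1 - q i)

/-- Probability of an event under the product distribution with marginals `q`. -/
noncomputable def prE {n : ℕ} (q : Fin n → ℝ) (E : Finset (Fin n) → Prop) : ℝ :=
  ∑ T : Finset (Fin n), if E T then prodP q T else 0

/-- Expectation of `g(S)` where `S` is drawn from the product distribution with
marginals `q`. -/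
noncomputable def exV {n : ℕ} (q : Fin n → ℝ) (g : Finset (Fin n) → ℝ) : ℝ :=
  ∑ T : Finset (Fin n), prodP q T * g T

noncomputable def mu {n : ℕ} (x : Fin n → ℝ) (s T : Finset (Fin n)) : ℝ :=
  (∏ i ∈ T, x i) * ∏ i ∈ s \ T, (1 - x i)

lemma mu_nonneg {n : ℕ} {x : Fin n → ℝ} (hx : ∀ i, x i ∈ Set.Icc (0:ℝ) 1)
    (s T : Finset (Fin n)) : 0 ≤ mu x s T := by
  refine mul_nonneg (Finset.prod_nonneg fun i _ => (hx i).1)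
    (Finset.prod_nonneg fun i _ => by linarith [(hx i).2])

lemma mu_insert_left {n : ℕ} (x : Fin n → ℝ) {s T : Finset (Fin n)} {a : Fin n}
    (ha : a ∉ s) (haT : a ∉ T) :
    mu x (insert a s) T = (1 - x a) * mu x s T := by
  unfold mu
  have h1 : insert a s \ T = insert a (s \ T) := by
    rw [Finset.insert_sdiff_of_notMem _ haT]
  have h2 : a ∉ s \ T := fun h => ha (Finset.mem_sdiff.1 h).1
  rw [h1, Finset.prod_insert h2]; ring

lemma mu_insert_right {n : ℕ} (x : Fin n → ℝ) {s T : Finset (Fin n)} {a : Fin n}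
    (ha : a ∉ s) (haT : a ∉ T) :
    mu x (insert a s) (insert a T) = x a * mu x s T := by
  unfold mu
  have h1 : insert a s \ insert a T = s \ T := by
    ext j
    simp only [Finset.mem_sdiff, Finset.mem_insert, not_or]
    constructor
    · rintro ⟨hj1 | hj1, hj2, hj3⟩
      · exact absurd hj1 hj2
      · exact ⟨hj1, hj3⟩
    · rintro ⟨hj1, hj2⟩
      exact ⟨Or.inr hj1, fun h => ha (h ▸ hj1), hj2⟩
  rw [h1, Finset.prod_insert haT]; ring

lemma mu_total {n : ℕ} (x : Fin n → ℝ) (s : Finset (Fin n)) :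
    ∑ T ∈ s.powerset, mu x s T = 1 := by
  induction s using Finset.induction_on with
  | empty => simp [mu]
  | @insert a s ha ih =>
    rw [Finset.sum_powerset_insert ha]
    have h1 : ∑ T ∈ s.powerset, mu x (insert a s) T
        = ∑ T ∈ s.powerset, (1 - x a) * mu x s T :=
      Finset.sum_congr rfl fun T hT =>
        mu_insert_left x ha (fun h => ha ((Finset.mem_powerset.1 hT) h))
    have h2 : ∑ T ∈ s.powerset, mu x (insert a s) (insert a T)
        = ∑ T ∈ s.powerset, x a * mu x s T :=
      Finset.sum_congr rfl fun T hT =>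
        mu_insert_right x ha (fun h => ha ((Finset.mem_powerset.1 hT) h))
    rw [h1, h2, ← Finset.sum_add_distrib]
    have : ∀ T ∈ s.powerset, (1 - x a) * mu x s T + x a * mu x s T = mu x s T := by
      intro T _; ring
    rw [Finset.sum_congr rfl this, ih]

lemma harris {n : ℕ} (x : Fin n → ℝ) (hx : ∀ i, x i ∈ Set.Icc (0:ℝ) 1)
    (s : Finset (Fin n)) :
    ∀ g h : Finset (Fin n) → ℝ,
      (∀ A B : Finset (Fin n), A ⊆ B → g B ≤ g A) →
      (∀ A B : Finset (Fin n), A ⊆ B → h B ≤ h A) →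
      (∑ T ∈ s.powerset, mu x s T * g T) * (∑ T ∈ s.powerset, mu x s T * h T)
        ≤ ∑ T ∈ s.powerset, mu x s T * (g T * h T) := by
  induction s using Finset.induction_on with
  | empty => intro g h _ _; simp [mu]
  | @insert a s ha ih =>
    intro g h hg hh
    have hxa0 : (0:ℝ) ≤ x a := (hx a).1
    have hxa1 : x a ≤ 1 := (hx a).2
    set G : Finset (Fin n) → ℝ := fun T => (1 - x a) * g T + x a * g (insert a T) with hG
    set H : Finset (Fin n) → ℝ := fun T => (1 - x a) * h T + x a * h (insert a T) with hH
    have hGant : ∀ A B : Finset (Fin n), A ⊆ B → G B ≤ G A := by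
      intro A B hAB
      have := hg A B hAB
      have := hg (insert a A) (insert a B) (Finset.insert_subset_insert a hAB)
      simp only [hG]; nlinarith
    have hHant : ∀ A B : Finset (Fin n), A ⊆ B → H B ≤ H A := by
      intro A B hAB
      have := hh A B hAB
      have := hh (insert a A) (insert a B) (Finset.insert_subset_insert a hAB)
      simp only [hH]; nlinarith
    -- rewrite sums over insert a s
    have key : ∀ F : Finset (Fin n) → ℝ,
        ∑ T ∈ (insert a s).powerset, mu x (insert a s) T * F T
          = ∑ T ∈ s.powerset, mu x s T *
              ((1 - x a) * F T + x a * F (insert a T)) := by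
      intro F
      rw [Finset.sum_powerset_insert ha]
      have h1 : ∑ T ∈ s.powerset, mu x (insert a s) T * F T
          = ∑ T ∈ s.powerset, mu x s T * ((1 - x a) * F T) := by
        refine Finset.sum_congr rfl fun T hT => ?_
        rw [mu_insert_left x ha (fun hh' => ha ((Finset.mem_powerset.1 hT) hh'))]; ring
      have h2 : ∑ T ∈ s.powerset, mu x (insert a s) (insert a T) * F (insert a T)
          = ∑ T ∈ s.powerset, mu x s T * (x a * F (insert a T)) := by
        refine Finset.sum_congr rfl fun T hT => ?_
        rw [mu_insert_right x ha (fun hh' => ha ((Finset.mem_powerset.1 hT) hh'))]; ring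
      rw [h1, h2, ← Finset.sum_add_distrib]
      refine Finset.sum_congr rfl fun T _ => by ring
    rw [key g, key h, key (fun T => g T * h T)]
    have step1 : ∑ T ∈ s.powerset, mu x s T * (G T * H T)
        ≤ ∑ T ∈ s.powerset, mu x s T *
            ((1 - x a) * (g T * h T) + x a * (g (insert a T) * h (insert a T))) := by
      refine Finset.sum_le_sum fun T _ => ?_
      refine mul_le_mul_of_nonneg_left ?_ (mu_nonneg hx s T)
      have h1 : g (insert a T) ≤ g T := hg T (insert a T) (Finset.subset_insert a T)
      have h2 : h (insert a T) ≤ h T := hh T (insert a T) (Finset.subset_insert a T)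
      simp only [hG, hH]
      nlinarith [mul_nonneg (mul_nonneg hxa0 (by linarith : (0:ℝ) ≤ 1 - x a))
        (mul_nonneg (by linarith : (0:ℝ) ≤ g T - g (insert a T))
          (by linarith : (0:ℝ) ≤ h T - h (insert a T)))]
    have step2 := ih G H hGant hHant
    calc (∑ T ∈ s.powerset, mu x s T * G T) * (∑ T ∈ s.powerset, mu x s T * H T)
        ≤ ∑ T ∈ s.powerset, mu x s T * (G T * H T) := step2
      _ ≤ _ := step1

lemma sum_cond_insert {n : ℕ} (i : Fin n) (F : Finset (Fin n) → ℝ) :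
    ∑ T : Finset (Fin n), (if i ∈ T then F T else 0)
      = ∑ T ∈ (Finset.univ.erase i).powerset, F (insert i T) := by
  rw [← Finset.sum_filter]
  refine Finset.sum_bij' (fun T _ => T.erase i) (fun T _ => insert i T) ?_ ?_ ?_ ?_ ?_
  · intro T hT
    simp only [Finset.mem_filter] at hT
    simp only [Finset.mem_powerset]
    exact Finset.erase_subset_erase i (Finset.subset_univ T)
  · intro T hT
    simp only [Finset.mem_filter, Finset.mem_univ, true_and]
    exact Finset.mem_insert_self i T
  · intro T hT
    simp only [Finset.mem_filter] at hT
    exact Finset.insert_erase hT.2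
  · intro T hT
    simp only [Finset.mem_powerset] at hT
    have : i ∉ T := fun h => (Finset.mem_erase.1 (hT h)).1 rfl
    exact Finset.erase_insert this
  · intro T hT
    simp only [Finset.mem_filter] at hT
    rw [Finset.insert_erase hT.2]

lemma prodP_insert_eq {n : ℕ} (x : Fin n → ℝ) {i : Fin n} {T : Finset (Fin n)}
    (hT : T ⊆ Finset.univ.erase i) :
    prodP x (insert i T) = x i * mu x (Finset.univ.erase i) T := by
  have hiT : i ∉ T := fun h => (Finset.mem_erase.1 (hT h)).1 rfl
  unfold prodP mu
  have h1 : (insert i T)ᶜ = Finset.univ.erase i \ T := by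
    ext j
    simp only [Finset.mem_compl, Finset.mem_insert, Finset.mem_sdiff, Finset.mem_erase,
      Finset.mem_univ, and_true, true_and, not_or]
  rw [h1, Finset.prod_insert hiT]; ring

lemma marginal_antitone {n : ℕ} {f : Finset (Fin n) → ℝ}
    (hsub : ∀ A B : Finset (Fin n), f (A ∪ B) + f (A ∩ B) ≤ f A + f B)
    {A B : Finset (Fin n)} (hAB : A ⊆ B) {i : Fin n} (hiB : i ∉ B) :
    f (insert i B) - f B ≤ f (insert i A) - f A := by
  have h := hsub (insert i A) B
  have h1 : insert i A ∪ B = insert i B := by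
    rw [Finset.insert_union, Finset.union_eq_right.2 hAB]
  have h2 : insert i A ∩ B = A := by
    ext j
    simp only [Finset.mem_inter, Finset.mem_insert]
    constructor
    · rintro ⟨hj1 | hj1, hj2⟩
      · exact absurd (hj1 ▸ hj2) hiB
      · exact hj1
    · intro hj; exact ⟨Or.inr hj, hAB hj⟩
  rw [h1, h2] at h
  linarith

lemma telescope_f {n : ℕ} (f : Finset (Fin n) → ℝ) (T : Finset (Fin n)) :
    ∑ i : Fin n, (f (T ∩ Finset.Iic i) - f (T ∩ Finset.Iio i)) = f T - f ∅ := by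
  set Fk : ℕ → ℝ := fun k => f (Finset.filter (fun j : Fin n => (j : ℕ) < k) T) with hFk
  have hIic : ∀ i : Fin n, T ∩ Finset.Iic i
      = Finset.filter (fun j : Fin n => (j : ℕ) < (i : ℕ) + 1) T := by
    intro i; ext j
    simp only [Finset.mem_inter, Finset.mem_Iic, Finset.mem_filter, Fin.le_def, Nat.lt_succ_iff]
  have hIio : ∀ i : Fin n, T ∩ Finset.Iio i
      = Finset.filter (fun j : Fin n => (j : ℕ) < (i : ℕ)) T := by
    intro i; ext j
    simp only [Finset.mem_inter, Finset.mem_Iio, Finset.mem_filter, Fin.lt_def]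
  calc ∑ i : Fin n, (f (T ∩ Finset.Iic i) - f (T ∩ Finset.Iio i))
      = ∑ i : Fin n, (fun k : ℕ => Fk (k + 1) - Fk k) (i : ℕ) := by
        refine Finset.sum_congr rfl fun i _ => ?_
        rw [hIic i, hIio i]
    _ = ∑ k ∈ Finset.range n, (Fk (k + 1) - Fk k) :=
        Fin.sum_univ_eq_sum_range (fun k : ℕ => Fk (k + 1) - Fk k) n
    _ = Fk n - Fk 0 := Finset.sum_range_sub Fk n
    _ = f T - f ∅ := by
        simp only [hFk]
        congr 1
        · congr 1; ext j; simp [j.isLt]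
        · congr 1; ext j; simp

lemma inter_Iic_of_mem {n : ℕ} {U : Finset (Fin n)} {i : Fin n} (h : i ∈ U) :
    U ∩ Finset.Iic i = insert i (U ∩ Finset.Iio i) := by
  ext j
  simp only [Finset.mem_inter, Finset.mem_Iic, Finset.mem_insert, Finset.mem_Iio]
  constructor
  · rintro ⟨hjU, hle⟩
    rcases lt_or_eq_of_le hle with h1 | h1
    · exact Or.inr ⟨hjU, h1⟩
    · exact Or.inl h1
  · rintro (rfl | ⟨hjU, hlt⟩)
    · exact ⟨h, le_refl _⟩
    · exact ⟨hjU, le_of_lt hlt⟩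

lemma inter_Iic_of_notMem {n : ℕ} {U : Finset (Fin n)} {i : Fin n} (h : i ∉ U) :
    U ∩ Finset.Iic i = U ∩ Finset.Iio i := by
  ext j
  simp only [Finset.mem_inter, Finset.mem_Iic, Finset.mem_Iio]
  constructor
  · rintro ⟨hjU, hle⟩
    exact ⟨hjU, lt_of_le_of_ne hle (fun e => h (e ▸ hjU))⟩
  · rintro ⟨hjU, hlt⟩
    exact ⟨hjU, le_of_lt hlt⟩

lemma insert_inter_Iio {n : ℕ} (T : Finset (Fin n)) (i : Fin n) :
    insert i T ∩ Finset.Iio i = T ∩ Finset.Iio i := by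
  ext j
  simp only [Finset.mem_inter, Finset.mem_insert, Finset.mem_Iio]
  constructor
  · rintro ⟨rfl | hj, hlt⟩
    · exact absurd hlt (lt_irrefl _)
    · exact ⟨hj, hlt⟩
  · rintro ⟨hj, hlt⟩
    exact ⟨Or.inr hj, hlt⟩

lemma notMem_inter_Iio {n : ℕ} (T : Finset (Fin n)) (i : Fin n) :
    i ∉ T ∩ Finset.Iio i := by
  simp [Finset.mem_inter, Finset.mem_Iio]

lemma prodP_nonneg {n : ℕ} {x : Fin n → ℝ} (hx : ∀ i, x i ∈ Set.Icc (0:ℝ) 1)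
    (T : Finset (Fin n)) : 0 ≤ prodP x T :=
  mul_nonneg (Finset.prod_nonneg fun i _ => (hx i).1)
    (Finset.prod_nonneg fun i _ => by linarith [(hx i).2])

lemma prodP_total {n : ℕ} (x : Fin n → ℝ) :
    ∑ T : Finset (Fin n), prodP x T = 1 := by
  have h1 : ∀ T : Finset (Fin n), prodP x T = mu x Finset.univ T := by
    intro T
    unfold prodP mu
    rw [Finset.compl_eq_univ_sdiff]
  calc ∑ T : Finset (Fin n), prodP x T
      = ∑ T ∈ (Finset.univ : Finset (Fin n)).powerset, mu x Finset.univ T := by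
        rw [Finset.powerset_univ]
        exact Finset.sum_congr rfl fun T _ => h1 T
    _ = 1 := mu_total x Finset.univ

/-- `S` is drawn from a product distribution and `S' = Alt(S)`
with `Alt(T) ⊆ T`.  If (i) `Pr[i ∈ S' | i ∈ S] ≥ β` for every `i` (stated in
multiplied-out form) and (ii) the alteration is monotone (if `i` survives in a
larger set it survives in a smaller one), then for every nonnegative monotone
submodular `f`, `E[f(S')] ≥ β · E[f(S)]`. -/
theorem monotone_alteration_submodular (n : ℕ)
    (x : Fin n → ℝ) (hx : ∀ i, x i ∈ Set.Icc (0:ℝ) 1)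
    (Alt : Finset (Fin n) → Finset (Fin n)) (hAlt : ∀ T, Alt T ⊆ T)
    (β : ℝ) (hβ : β ∈ Set.Icc (0:ℝ) 1)
    (hmarg : ∀ i : Fin n,
      prE x (fun T => i ∈ Alt T) ≥ β * prE x (fun T => i ∈ T))
    (hmonot : ∀ T₁ T₂ : Finset (Fin n), T₁ ⊆ T₂ → ∀ i ∈ T₁,
      i ∈ Alt T₂ → i ∈ Alt T₁)
    (f : Finset (Fin n) → ℝ)
    (hmono : ∀ A B : Finset (Fin n), A ⊆ B → f A ≤ f B)
    (hsub : ∀ A B : Finset (Fin n), f (A ∪ B) + f (A ∩ B) ≤ f A + f B)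
    (hnn : ∀ A : Finset (Fin n), 0 ≤ f A) :
    exV x (fun T => f (Alt T)) ≥ β * exV x f := by
  classical
  obtain ⟨hβ0, hβ1⟩ := hβ
  set D : Fin n → Finset (Fin n) → ℝ :=
    fun i T => f (T ∩ Finset.Iic i) - f (T ∩ Finset.Iio i) with hD
  -- per-element key inequality
  have key : ∀ i : Fin n,
      β * ∑ T : Finset (Fin n), prodP x T * (if i ∈ T then D i T else 0)
        ≤ ∑ T : Finset (Fin n), prodP x T * (if i ∈ Alt T then D i T else 0) := by
    intro i
    set A : Finset (Fin n) → ℝ :=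
      fun T => if i ∈ Alt (insert i T) then 1 else 0 with hA
    set B : Finset (Fin n) → ℝ :=
      fun T => f (insert i (T ∩ Finset.Iio i)) - f (T ∩ Finset.Iio i) with hB
    have hDins : ∀ T : Finset (Fin n), D i (insert i T) = B T := by
      intro T
      simp only [hD, hB]
      rw [inter_Iic_of_mem (Finset.mem_insert_self i T), insert_inter_Iio]
    have hAant : ∀ T₁ T₂ : Finset (Fin n), T₁ ⊆ T₂ → A T₂ ≤ A T₁ := by
      intro T₁ T₂ hT
      by_cases h2 : i ∈ Alt (insert i T₂)
      · have h1 : i ∈ Alt (insert i T₁) :=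
          hmonot _ _ (Finset.insert_subset_insert i hT) i (Finset.mem_insert_self i T₁) h2
        simp [hA, h1, h2]
      · simp only [hA, if_neg h2]
        split <;> norm_num
    have hBant : ∀ T₁ T₂ : Finset (Fin n), T₁ ⊆ T₂ → B T₂ ≤ B T₁ := by
      intro T₁ T₂ hT
      exact marginal_antitone hsub
        (Finset.inter_subset_inter hT (Finset.Subset.refl _)) (notMem_inter_Iio T₂ i)
    have hBnn : ∀ T : Finset (Fin n), 0 ≤ B T := by
      intro T
      have := hmono (T ∩ Finset.Iio i) (insert i (T ∩ Finset.Iio i)) (Finset.subset_insert _ _)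
      simp only [hB]; linarith
    have hEBnn : 0 ≤ ∑ T ∈ (Finset.univ.erase i).powerset, mu x (Finset.univ.erase i) T * B T :=
      Finset.sum_nonneg fun T _ => mul_nonneg (mu_nonneg hx _ T) (hBnn T)
    -- marginal condition in the conditional form
    have hmem : prE x (fun T => i ∈ T) = x i := by
      have h1 : prE x (fun T => i ∈ T)
          = ∑ T : Finset (Fin n), (if i ∈ T then prodP x T else 0) := by
        unfold prE
        refine Finset.sum_congr rfl fun T _ => ?_
        by_cases h : i ∈ T <;> simp [h]
      rw [h1, sum_cond_insert i (fun T => prodP x T),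
        Finset.sum_congr rfl (fun T hT => prodP_insert_eq x (Finset.mem_powerset.1 hT)),
        ← Finset.mul_sum, mu_total, mul_one]
    have hAltE : prE x (fun T => i ∈ Alt T)
        = x i * ∑ T ∈ (Finset.univ.erase i).powerset, mu x (Finset.univ.erase i) T * A T := by
      have h1 : prE x (fun T => i ∈ Alt T)
          = ∑ T : Finset (Fin n),
              (if i ∈ T then (if i ∈ Alt T then prodP x T else 0) else 0) := by
        unfold prE
        refine Finset.sum_congr rfl fun T _ => ?_
        by_cases ha : i ∈ Alt T
        · simp [ha, hAlt T ha]
        · by_cases hb : i ∈ T <;> simp [ha, hb]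
      rw [h1, sum_cond_insert i (fun T => if i ∈ Alt T then prodP x T else 0),
        Finset.mul_sum]
      refine Finset.sum_congr rfl fun T hT => ?_
      by_cases h2 : i ∈ Alt (insert i T)
      · simp only [hA, if_pos h2, mul_one]
        rw [prodP_insert_eq x (Finset.mem_powerset.1 hT)]
      · simp [hA, if_neg h2]
    have hmargA : β * x i
        ≤ x i * ∑ T ∈ (Finset.univ.erase i).powerset, mu x (Finset.univ.erase i) T * A T := by
      have h := hmarg i
      rw [hAltE, hmem] at h
      linarith
    -- rewrite both sides of the goal through the bijection
    have hL : ∑ T : Finset (Fin n), prodP x T * (if i ∈ T then D i T else 0)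
        = x i * ∑ T ∈ (Finset.univ.erase i).powerset, mu x (Finset.univ.erase i) T * B T := by
      have h1 : ∑ T : Finset (Fin n), prodP x T * (if i ∈ T then D i T else 0)
          = ∑ T : Finset (Fin n), (if i ∈ T then prodP x T * D i T else 0) := by
        refine Finset.sum_congr rfl fun T _ => ?_
        by_cases h : i ∈ T <;> simp [h]
      rw [h1, sum_cond_insert i (fun T => prodP x T * D i T), Finset.mul_sum]
      refine Finset.sum_congr rfl fun T hT => ?_
      rw [prodP_insert_eq x (Finset.mem_powerset.1 hT), hDins T]
      ring
    have hR : ∑ T : Finset (Fin n), prodP x T * (if i ∈ Alt T then D i T else 0)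
        = x i * ∑ T ∈ (Finset.univ.erase i).powerset,
            mu x (Finset.univ.erase i) T * (A T * B T) := by
      have h1 : ∑ T : Finset (Fin n), prodP x T * (if i ∈ Alt T then D i T else 0)
          = ∑ T : Finset (Fin n),
              (if i ∈ T then (if i ∈ Alt T then prodP x T * D i T else 0) else 0) := by
        refine Finset.sum_congr rfl fun T _ => ?_
        by_cases ha : i ∈ Alt T
        · simp [ha, hAlt T ha]
        · by_cases hb : i ∈ T <;> simp [ha, hb]
      rw [h1, sum_cond_insert i (fun T => if i ∈ Alt T then prodP x T * D i T else 0),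
        Finset.mul_sum]
      refine Finset.sum_congr rfl fun T hT => ?_
      by_cases h2 : i ∈ Alt (insert i T)
      · simp only [hA, if_pos h2, one_mul]
        rw [prodP_insert_eq x (Finset.mem_powerset.1 hT), hDins T]; ring
      · simp [hA, if_neg h2]
    rw [hL, hR]
    have hfkg := harris x hx (Finset.univ.erase i) A B hAant hBant
    have hxinn : (0 : ℝ) ≤ x i := (hx i).1
    calc β * (x i * ∑ T ∈ (Finset.univ.erase i).powerset, mu x (Finset.univ.erase i) T * B T)
        = (β * x i) * ∑ T ∈ (Finset.univ.erase i).powerset, mu x (Finset.univ.erase i) T * B T := by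
          ring
      _ ≤ (x i * ∑ T ∈ (Finset.univ.erase i).powerset, mu x (Finset.univ.erase i) T * A T)
            * ∑ T ∈ (Finset.univ.erase i).powerset, mu x (Finset.univ.erase i) T * B T :=
          mul_le_mul_of_nonneg_right hmargA hEBnn
      _ = x i * ((∑ T ∈ (Finset.univ.erase i).powerset, mu x (Finset.univ.erase i) T * A T)
            * ∑ T ∈ (Finset.univ.erase i).powerset, mu x (Finset.univ.erase i) T * B T) := by
          ring
      _ ≤ x i * ∑ T ∈ (Finset.univ.erase i).powerset,
            mu x (Finset.univ.erase i) T * (A T * B T) :=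
          mul_le_mul_of_nonneg_left hfkg hxinn
  -- exact decomposition of f and the pointwise lower bound for f ∘ Alt
  have exact_decomp : ∀ T : Finset (Fin n),
      f T = f ∅ + ∑ i : Fin n, (if i ∈ T then D i T else 0) := by
    intro T
    have ht := telescope_f f T
    have h0 : ∑ i : Fin n, (if i ∈ T then D i T else 0)
        = ∑ i : Fin n, (f (T ∩ Finset.Iic i) - f (T ∩ Finset.Iio i)) := by
      refine Finset.sum_congr rfl fun i _ => ?_
      by_cases h1 : i ∈ T
      · rw [if_pos h1]
      · rw [if_neg h1, inter_Iic_of_notMem h1, sub_self]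
    rw [h0, ht]; ring
  have lower : ∀ T : Finset (Fin n),
      f ∅ + ∑ i : Fin n, (if i ∈ Alt T then D i T else 0) ≤ f (Alt T) := by
    intro T
    have ht := telescope_f f (Alt T)
    have hle : ∑ i : Fin n, (if i ∈ Alt T then D i T else 0)
        ≤ ∑ i : Fin n, (f (Alt T ∩ Finset.Iic i) - f (Alt T ∩ Finset.Iio i)) := by
      refine Finset.sum_le_sum fun i _ => ?_
      by_cases h1 : i ∈ Alt T
      · rw [if_pos h1]
        simp only [hD]
        rw [inter_Iic_of_mem h1, inter_Iic_of_mem (hAlt T h1)]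
        exact marginal_antitone hsub
          (Finset.inter_subset_inter (hAlt T) (Finset.Subset.refl _))
          (notMem_inter_Iio T i)
      · rw [if_neg h1, inter_Iic_of_notMem h1, sub_self]
    linarith
  -- assemble
  have wnn : ∀ T : Finset (Fin n), 0 ≤ prodP x T := prodP_nonneg hx
  have wtot : ∑ T : Finset (Fin n), prodP x T = 1 := prodP_total x
  have rearr : ∀ t : Fin n → Finset (Fin n) → ℝ, ∀ c : ℝ,
      ∑ T : Finset (Fin n), prodP x T * (c + ∑ i : Fin n, t i T)
        = c + ∑ i : Fin n, ∑ T : Finset (Fin n), prodP x T * t i T := by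
    intro t c
    simp only [mul_add, Finset.sum_add_distrib, Finset.mul_sum]
    rw [← Finset.sum_mul, wtot, one_mul, Finset.sum_comm]
  rw [ge_iff_le]
  calc β * exV x f
      = β * ∑ T : Finset (Fin n), prodP x T *
          (f ∅ + ∑ i : Fin n, (if i ∈ T then D i T else 0)) := by
        unfold exV
        congr 1
        exact Finset.sum_congr rfl fun T _ => by rw [← exact_decomp T]
    _ = β * (f ∅ + ∑ i : Fin n, ∑ T : Finset (Fin n),
          prodP x T * (if i ∈ T then D i T else 0)) := by
        rw [rearr]
    _ ≤ f ∅ + ∑ i : Fin n, ∑ T : Finset (Fin n),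
          prodP x T * (if i ∈ Alt T then D i T else 0) := by
        rw [mul_add, Finset.mul_sum]
        refine add_le_add (by nlinarith [hnn (∅ : Finset (Fin n))])
          (Finset.sum_le_sum fun i _ => key i)
    _ = ∑ T : Finset (Fin n), prodP x T *
          (f ∅ + ∑ i : Fin n, (if i ∈ Alt T then D i T else 0)) := (rearr _ _).symm
    _ ≤ ∑ T : Finset (Fin n), prodP x T * f (Alt T) :=
        Finset.sum_le_sum fun T _ => mul_le_mul_of_nonneg_left (lower T) (wnn T)
    _ = exV x (fun T => f (Alt T)) := rfl
end

section
/- Let f : 2^{[n]} → ℝ_{≥0} be a monotone submodular function with multilinear extension F, let x ∈ [0,1]^n be feasible for the strengthened LP of a k-column-sparse packing instance, let α > 0 with αk ≥ 2, and let S include each item i independently with probability x_i/(αk). Let S' = Alt'(S), where Alt'(T) = { i ∈ T : for every j ∈ N(i), Σ_{i' ∈ T : s_{i'j} ≥ s_{ij}} s_{i'j} ≤ 1 }. Then S' is always feasible for the instance and E[f(S')] ≥ (1/(αk)) · ( 1 − (1/(αk))(1 + (2/(αk))^{1/3}) )^k · F(x). -/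
/-!
Feasibility: in each constraint the smallest surviving item bounds the load of all survivors.

For the value, submodularity gives `f(S') ≥ f(∅) + ∑_{i ∈ S'} Δᵢ(S)`, where `Δᵢ(S)` is the
marginal value of `i` over the elements of `S` below `i`. Conditioned on `i ∈ S`, both the event
`i ∈ S'` and `Δᵢ(S)` are decreasing in the rest of `S`, so by Harris' inequality the expectation
factorizes; Harris again bounds `P(i ∈ S' | i ∈ S)` below by the product over `j ∈ N(i)` of the
probabilities that `i` fits in constraint `j`, each at least `1 - (1 + ε)/(αk)` with
`ε = (2/(αk))^{1/3}`. Since the marginals decrease as the sampling probabilities grow, sampling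
at rate `x/(αk)` instead of `x` costs at most the factor `1/(αk)`.
-/

open Finset
open scoped Classical BigOperators

/-- The alteration map of the improved algorithm: keep `i ∈ T` iff for every
constraint `j` in which `i` participates, the total size of the items of `T`
that are at least as large as `i` in constraint `j` is at most `1`. -/
noncomputable def altSet' {n m : ℕ} (s : Fin n → Fin m → ℝ) (T : Finset (Fin n)) :
    Finset (Fin n) :=
  T.filter (fun i => ∀ j, 0 < s i j →
    (∑ i' ∈ T.filter (fun i'' => s i j ≤ s i'' j), s i' j) ≤ 1)

section ProdMean

variable {ι : Type*} [DecidableEq ι] {q : ι → ℝ} {E : Finset ι} {g h : Finset ι → ℝ}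

noncomputable def prodMean (q : ι → ℝ) (E : Finset ι) (g : Finset ι → ℝ) : ℝ :=
  ∑ T ∈ E.powerset, ((∏ i ∈ T, q i) * ∏ i ∈ E \ T, (1 - q i)) * g T

lemma prodMean_empty (q : ι → ℝ) (g : Finset ι → ℝ) : prodMean q ∅ g = g ∅ := by
  simp [prodMean]

lemma prodMean_insert {a : ι} (ha : a ∉ E) (g : Finset ι → ℝ) :
    prodMean q (insert a E) g =
      q a * prodMean q E (fun T => g (insert a T)) + (1 - q a) * prodMean q E g := by
  rw [prodMean, sum_powerset_insert ha, prodMean, prodMean, mul_sum, mul_sum, add_comm]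
  congr 1 <;> refine sum_congr rfl fun T hT => ?_
  · have haT : a ∉ T := fun h => ha (mem_powerset.1 hT h)
    rw [prod_insert haT, insert_sdiff_insert, sdiff_insert_of_notMem ha]
    ring
  · have haT : a ∉ T := fun h => ha (mem_powerset.1 hT h)
    rw [insert_sdiff_of_notMem _ haT, prod_insert fun h => ha (mem_sdiff.1 h).1]
    ring

lemma prodMean_of_mem {i : ι} (hi : i ∈ E) (g : Finset ι → ℝ) :
    prodMean q E g = q i * prodMean q (E.erase i) (fun T => g (insert i T)) +
      (1 - q i) * prodMean q (E.erase i) g := by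
  conv_lhs => rw [← insert_erase hi]
  exact prodMean_insert (notMem_erase i E) g

lemma prodMean_congr (hgh : ∀ T ⊆ E, g T = h T) : prodMean q E g = prodMean q E h :=
  sum_congr rfl fun T hT => by rw [hgh T (mem_powerset.1 hT)]

lemma prodMean_mono (hq : ∀ i, q i ∈ Set.Icc (0:ℝ) 1) (hgh : ∀ T ⊆ E, g T ≤ h T) :
    prodMean q E g ≤ prodMean q E h := by
  refine sum_le_sum fun T hT => mul_le_mul_of_nonneg_left (hgh T (mem_powerset.1 hT)) ?_
  exact mul_nonneg (prod_nonneg fun i _ => (hq i).1)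
    (prod_nonneg fun i _ => sub_nonneg.2 (hq i).2)

lemma prodMean_const (q : ι → ℝ) (E : Finset ι) (c : ℝ) : prodMean q E (fun _ => c) = c := by
  rw [prodMean, ← sum_mul, ← prod_add, prod_eq_one fun i _ => add_sub_cancel _ _, one_mul]

lemma prodMean_add (q : ι → ℝ) (E : Finset ι) (g h : Finset ι → ℝ) :
    prodMean q E (fun T => g T + h T) = prodMean q E g + prodMean q E h := by
  simp only [prodMean, mul_add, sum_add_distrib]

lemma prodMean_sub (q : ι → ℝ) (E : Finset ι) (g h : Finset ι → ℝ) :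
    prodMean q E (fun T => g T - h T) = prodMean q E g - prodMean q E h := by
  simp only [prodMean, mul_sub, sum_sub_distrib]

lemma prodMean_const_mul (q : ι → ℝ) (E : Finset ι) (c : ℝ) (g : Finset ι → ℝ) :
    prodMean q E (fun T => c * g T) = c * prodMean q E g := by
  simp only [prodMean, mul_sum, mul_left_comm]

lemma prodMean_sum {κ : Type*} (q : ι → ℝ) (E : Finset ι) (K : Finset κ)
    (g : κ → Finset ι → ℝ) :
    prodMean q E (fun T => ∑ k ∈ K, g k T) = ∑ k ∈ K, prodMean q E (g k) := by
  simp only [prodMean, mul_sum]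
  exact sum_comm

lemma prodMean_nonneg (hq : ∀ i, q i ∈ Set.Icc (0:ℝ) 1) (hg : ∀ T ⊆ E, 0 ≤ g T) :
    0 ≤ prodMean q E g :=
  prodMean_const q E 0 ▸ prodMean_mono hq hg

lemma prodMean_ite_mem {i : ι} (hi : i ∈ E) (g : Finset ι → ℝ) :
    prodMean q E (fun T => if i ∈ T then g T else 0) =
      q i * prodMean q (E.erase i) (fun T => g (insert i T)) := by
  have hzero : prodMean q (E.erase i) (fun T => if i ∈ T then g T else 0) = 0 := by
    rw [prodMean_congr (h := fun _ => 0), prodMean_const]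
    exact fun T hT => if_neg fun h => notMem_erase i E (hT h)
  rw [prodMean_of_mem hi, hzero]
  simp only [mem_insert_self, if_true, mul_zero, add_zero]

lemma prodMean_indicator_mem {i : ι} (hi : i ∈ E) :
    prodMean q E (fun T => if i ∈ T then 1 else 0) = q i := by
  rw [prodMean_ite_mem hi, prodMean_const, mul_one]

lemma prodMean_indicator_pair {a b : ι} (ha : a ∈ E) (hb : b ∈ E) (hab : a ≠ b) :
    prodMean q E (fun T => if a ∈ T ∧ b ∈ T then 1 else 0) = q a * q b := by
  simp only [ite_and]
  rw [prodMean_ite_mem ha, prodMean_congr (h := fun T => if b ∈ T then 1 else 0),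
    prodMean_indicator_mem (mem_erase.2 ⟨hab.symm, hb⟩)]
  exact fun T _ => by simp only [mem_insert, hab.symm, false_or]

lemma prodMean_sum_mem (q : ι → ℝ) (E : Finset ι) (v : ι → ℝ) :
    prodMean q E (fun T => ∑ i ∈ T, v i) = ∑ i ∈ E, q i * v i := by
  rw [prodMean_congr (h := fun T => ∑ i ∈ E, v i * if i ∈ T then 1 else 0), prodMean_sum]
  · refine sum_congr rfl fun i hi => ?_
    rw [prodMean_const_mul, prodMean_indicator_mem hi, mul_comm]
  · intro T hT
    simp only [mul_ite, mul_one, mul_zero]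
    rw [sum_ite_mem, inter_eq_right.2 hT]

end ProdMean

section Correlation

lemma antitone_indicator {ι : Type*} {P : Finset ι → Prop} [DecidablePred P]
    (hP : ∀ ⦃A B⦄, A ⊆ B → P B → P A) :
    Antitone fun T => if P T then (1:ℝ) else 0 := fun A B hAB => by
  by_cases hB : P B
  · simp only [hB, hP hAB hB, if_true, le_refl]
  · simp only [hB, if_false]
    split_ifs <;> norm_num

variable {ι : Type*} [DecidableEq ι] {q : ι → ℝ}

lemma prodMean_insert_le (hq : ∀ i, q i ∈ Set.Icc (0:ℝ) 1) (E : Finset ι) {g : Finset ι → ℝ}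
    (hg : Antitone g) (a : ι) :
    prodMean q E (fun T => g (insert a T)) ≤ prodMean q E g :=
  prodMean_mono hq fun T _ => hg (subset_insert a T)

/-- Harris' inequality. -/
theorem prodMean_mul_prodMean_le_of_antitone (hq : ∀ i, q i ∈ Set.Icc (0:ℝ) 1)
    (E : Finset ι) {g h : Finset ι → ℝ} (hg : Antitone g) (hh : Antitone h) :
    prodMean q E g * prodMean q E h ≤ prodMean q E (fun T => g T * h T) := by
  induction E using Finset.induction generalizing g h with
  | empty => simp only [prodMean_empty, le_refl]
  | @insert a E ha ih =>
    have hg' : Antitone fun T => g (insert a T) := fun _ _ hAB => hg (insert_subset_insert a hAB)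
    have hh' : Antitone fun T => h (insert a T) := fun _ _ hAB => hh (insert_subset_insert a hAB)
    have hgle := prodMean_insert_le hq E hg a
    have hhle := prodMean_insert_le hq E hh a
    have ih₁ := ih hg' hh'
    have ih₀ := ih hg hh
    obtain ⟨hqa₀, hqa₁⟩ := hq a
    rw [prodMean_insert ha, prodMean_insert ha, prodMean_insert ha]
    set A₁ := prodMean q E fun T => g (insert a T)
    set B₁ := prodMean q E fun T => h (insert a T)
    set A₀ := prodMean q E g
    set B₀ := prodMean q E h
    calc (q a * A₁ + (1 - q a) * A₀) * (q a * B₁ + (1 - q a) * B₀)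
        = q a * (A₁ * B₁) + (1 - q a) * (A₀ * B₀)
          - q a * (1 - q a) * ((A₀ - A₁) * (B₀ - B₁)) := by ring
      _ ≤ q a * (A₁ * B₁) + (1 - q a) * (A₀ * B₀) := by
        have := mul_nonneg (mul_nonneg hqa₀ (sub_nonneg.2 hqa₁))
          (mul_nonneg (sub_nonneg.2 hgle) (sub_nonneg.2 hhle))
        linarith
      _ ≤ _ := add_le_add (mul_le_mul_of_nonneg_left ih₁ hqa₀)
        (mul_le_mul_of_nonneg_left ih₀ (sub_nonneg.2 hqa₁))

theorem prod_prodMean_le_of_antitone {κ : Type*} (hq : ∀ i, q i ∈ Set.Icc (0:ℝ) 1)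
    (E : Finset ι) (J : Finset κ) {g : κ → Finset ι → ℝ} (hg : ∀ j ∈ J, Antitone (g j))
    (hg₀ : ∀ j ∈ J, ∀ T, 0 ≤ g j T) :
    ∏ j ∈ J, prodMean q E (g j) ≤ prodMean q E (fun T => ∏ j ∈ J, g j T) := by
  induction J using Finset.induction with
  | empty => simp only [prod_empty, prodMean_const, le_refl]
  | @insert b J hb ih =>
    have hJ : Antitone fun T => ∏ j ∈ J, g j T := fun A B hAB =>
      prod_le_prod (fun j hj => hg₀ j (mem_insert_of_mem hj) B)
        fun j hj => hg j (mem_insert_of_mem hj) hAB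
    have hb₀ : 0 ≤ prodMean q E (g b) :=
      prodMean_nonneg hq fun T _ => hg₀ b (mem_insert_self b J) T
    calc ∏ j ∈ insert b J, prodMean q E (g j)
        = prodMean q E (g b) * ∏ j ∈ J, prodMean q E (g j) := prod_insert hb
      _ ≤ prodMean q E (g b) * prodMean q E (fun T => ∏ j ∈ J, g j T) :=
        mul_le_mul_of_nonneg_left (ih (fun j hj => hg j (mem_insert_of_mem hj))
          fun j hj => hg₀ j (mem_insert_of_mem hj)) hb₀
      _ ≤ prodMean q E (fun T => g b T * ∏ j ∈ J, g j T) :=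
        prodMean_mul_prodMean_le_of_antitone hq E (hg b (mem_insert_self b J)) hJ
      _ = prodMean q E (fun T => ∏ j ∈ insert b J, g j T) := by simp only [prod_insert hb]

theorem prodMean_le_prodMean_of_le_of_antitone {p : ι → ℝ} (hp : ∀ i, p i ∈ Set.Icc (0:ℝ) 1)
    (hq : ∀ i, q i ∈ Set.Icc (0:ℝ) 1) (hpq : ∀ i, p i ≤ q i) (E : Finset ι)
    {g : Finset ι → ℝ} (hg : Antitone g) : prodMean q E g ≤ prodMean p E g := by
  induction E using Finset.induction generalizing g with
  | empty => simp only [prodMean_empty, le_refl]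
  | @insert a E ha ih =>
    have hg' : Antitone fun T => g (insert a T) := fun _ _ hAB => hg (insert_subset_insert a hAB)
    have hle := prodMean_insert_le hq E hg a
    rw [prodMean_insert ha, prodMean_insert ha]
    calc q a * prodMean q E (fun T => g (insert a T)) + (1 - q a) * prodMean q E g
        ≤ p a * prodMean q E (fun T => g (insert a T)) + (1 - p a) * prodMean q E g := by
          linarith [mul_nonneg (sub_nonneg.2 (hpq a)) (sub_nonneg.2 hle)]
      _ ≤ _ := add_le_add (mul_le_mul_of_nonneg_left (ih hg') (hp a).1)
        (mul_le_mul_of_nonneg_left (ih hg) (sub_nonneg.2 (hp a).2))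

end Correlation

section Submodular

variable {ι : Type*} [LinearOrder ι] {f : Finset ι → ℝ}

noncomputable def marginalBelow (f : Finset ι → ℝ) (i : ι) (T : Finset ι) : ℝ :=
  f (insert i (T.filter (· < i))) - f (T.filter (· < i))

lemma marginalBelow_insert_self (f : Finset ι → ℝ) (i : ι) (T : Finset ι) :
    marginalBelow f i (insert i T) = marginalBelow f i T := by
  simp only [marginalBelow, filter_insert, lt_irrefl, if_false]

lemma marginalBelow_nonneg (hmono : ∀ A B : Finset ι, A ⊆ B → f A ≤ f B) (i : ι)
    (T : Finset ι) : 0 ≤ marginalBelow f i T :=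
  sub_nonneg.2 (hmono _ _ (subset_insert i _))

lemma marginalBelow_antitone (hsub : ∀ A B : Finset ι, f (A ∪ B) + f (A ∩ B) ≤ f A + f B)
    (i : ι) : Antitone (marginalBelow f i) := by
  intro A B hAB
  set A' := A.filter (· < i)
  set B' := B.filter (· < i)
  have hA'B' : A' ⊆ B' := filter_subset_filter _ hAB
  have hiB' : i ∉ B' := fun h => lt_irrefl i (mem_filter.1 h).2
  have hunion : insert i A' ∪ B' = insert i B' := by
    rw [insert_union, union_eq_right.2 hA'B']
  have hinter : insert i A' ∩ B' = A' := by
    rw [insert_inter_of_notMem hiB', inter_eq_left.2 hA'B']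
  have := hsub (insert i A') B'
  rw [hunion, hinter] at this
  simp only [marginalBelow]
  linarith

lemma sum_marginalBelow_eq (f : Finset ι → ℝ) (T : Finset ι) :
    ∑ i ∈ T, marginalBelow f i T = f T - f ∅ := by
  induction T using Finset.induction_on_max with
  | empty => simp only [sum_empty, sub_self]
  | insert a T hlt ih =>
    have haT : a ∉ T := fun h => lt_irrefl a (hlt a h)
    have hlow : ∀ i ∈ T, marginalBelow f i (insert a T) = marginalBelow f i T := fun i hi => by
      simp only [marginalBelow, filter_insert, (hlt i hi).not_gt, if_false]
    have htop : (insert a T).filter (· < a) = T := by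
      rw [filter_insert, if_neg (lt_irrefl a), filter_true_of_mem hlt]
    rw [sum_insert haT, sum_congr rfl hlow, ih, marginalBelow, htop]
    ring

lemma sum_marginalBelow_le_of_subset
    (hsub : ∀ A B : Finset ι, f (A ∪ B) + f (A ∩ B) ≤ f A + f B) {S T : Finset ι}
    (hST : S ⊆ T) : ∑ i ∈ S, marginalBelow f i T ≤ f S - f ∅ :=
  sum_marginalBelow_eq f S ▸ sum_le_sum fun i _ => marginalBelow_antitone hsub i hST

lemma prodMean_eq_add_sum_marginalBelow (q : ι → ℝ) (E : Finset ι) (f : Finset ι → ℝ) :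
    prodMean q E f = f ∅ + ∑ i ∈ E, q i * prodMean q (E.erase i) (marginalBelow f i) := by
  rw [prodMean_congr (h := fun T => f ∅ + ∑ i ∈ E, if i ∈ T then marginalBelow f i T else 0),
    prodMean_add, prodMean_const, prodMean_sum]
  · refine congrArg _ (sum_congr rfl fun i hi => ?_)
    simp only [prodMean_ite_mem hi, marginalBelow_insert_self]
  · intro T hT
    rw [sum_ite_mem, inter_eq_right.2 hT, sum_marginalBelow_eq]
    ring

theorem mul_prodMean_add_le_prodMean_mul
    (hsub : ∀ A B : Finset ι, f (A ∪ B) + f (A ∩ B) ≤ f A + f B) {x : ι → ℝ} (hx : ∀ i, x i ∈ Set.Icc (0:ℝ) 1) {t : ℝ} (ht : t ∈ Set.Icc (0:ℝ) 1)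
    (E : Finset ι) :
    t * prodMean x E f + (1 - t) * f ∅ ≤ prodMean (fun i => t * x i) E f := by
  have htx : ∀ i, t * x i ∈ Set.Icc (0:ℝ) 1 := fun i =>
    ⟨mul_nonneg ht.1 (hx i).1, mul_le_one₀ ht.2 (hx i).1 (hx i).2⟩
  have hmarg : ∀ i ∈ E, t * x i * prodMean x (E.erase i) (marginalBelow f i) ≤
      t * x i * prodMean (fun i => t * x i) (E.erase i) (marginalBelow f i) := fun i _ =>
    mul_le_mul_of_nonneg_left
      (prodMean_le_prodMean_of_le_of_antitone htx hx
        (fun j => mul_le_of_le_one_left (hx j).1 ht.2) _ (marginalBelow_antitone hsub i))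
      (htx i).1
  rw [prodMean_eq_add_sum_marginalBelow, prodMean_eq_add_sum_marginalBelow, mul_add, mul_sum]
  simp only [← mul_assoc]
  linarith [sum_le_sum hmarg]

variable {q : ι → ℝ} {E : Finset ι} {alt : Finset ι → Finset ι} {ρ : ℝ}

lemma mul_prodMean_marginalBelow_le (hq : ∀ i, q i ∈ Set.Icc (0:ℝ) 1)
    (hmono : ∀ A B : Finset ι, A ⊆ B → f A ≤ f B)
    (hsub : ∀ A B : Finset ι, f (A ∪ B) + f (A ∩ B) ≤ f A + f B)
    (halt : ∀ T, alt T ⊆ T)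
    (halt_mono : ∀ i ⦃A B : Finset ι⦄, A ⊆ B → i ∈ alt (insert i B) → i ∈ alt (insert i A))
    {i : ι} (hi : i ∈ E)
    (hbal : ρ ≤ prodMean q (E.erase i) (fun T => if i ∈ alt (insert i T) then 1 else 0)) :
    ρ * (q i * prodMean q (E.erase i) (marginalBelow f i)) ≤
      prodMean q E (fun T => if i ∈ alt T then marginalBelow f i T else 0) := by
  set keep : Finset ι → ℝ := fun T => if i ∈ alt (insert i T) then 1 else 0
  have hkeep : Antitone keep := antitone_indicator fun A B hAB => halt_mono i hAB
  have hcond : prodMean q E (fun T => if i ∈ alt T then marginalBelow f i T else 0) =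
      q i * prodMean q (E.erase i) (fun T => keep T * marginalBelow f i T) := by
    calc prodMean q E (fun T => if i ∈ alt T then marginalBelow f i T else 0)
        = prodMean q E (fun T => if i ∈ T then
            (if i ∈ alt T then marginalBelow f i T else 0) else 0) :=
          prodMean_congr fun T _ => by
            by_cases hiT : i ∈ T
            · rw [if_pos hiT]
            · rw [if_neg hiT, if_neg fun h => hiT (halt T h)]
      _ = _ := by
          rw [prodMean_ite_mem hi]
          simp only [keep, marginalBelow_insert_self, ite_mul, one_mul, zero_mul]
  rw [hcond, mul_left_comm]
  refine mul_le_mul_of_nonneg_left ?_ (hq i).1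
  calc ρ * prodMean q (E.erase i) (marginalBelow f i)
      ≤ prodMean q (E.erase i) keep * prodMean q (E.erase i) (marginalBelow f i) :=
        mul_le_mul_of_nonneg_right hbal
          (prodMean_nonneg hq fun T _ => marginalBelow_nonneg hmono i T)
    _ ≤ _ := prodMean_mul_prodMean_le_of_antitone hq _ hkeep (marginalBelow_antitone hsub i)

/-- Monotone `ρ`-balanced contention resolution schemes (Chekuri–Vondrák–Zenklusen). -/
theorem mul_prodMean_le_prodMean_alt (hq : ∀ i, q i ∈ Set.Icc (0:ℝ) 1)
    (hmono : ∀ A B : Finset ι, A ⊆ B → f A ≤ f B)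
    (hsub : ∀ A B : Finset ι, f (A ∪ B) + f (A ∩ B) ≤ f A + f B) (hf₀ : 0 ≤ f ∅)
    (halt : ∀ T, alt T ⊆ T)
    (halt_mono : ∀ i ⦃A B : Finset ι⦄, A ⊆ B → i ∈ alt (insert i B) → i ∈ alt (insert i A))
    (hρ : ρ ≤ 1)
    (hbal : ∀ i ∈ E,
      ρ ≤ prodMean q (E.erase i) (fun T => if i ∈ alt (insert i T) then 1 else 0)) :
    ρ * prodMean q E f ≤ prodMean q E (fun T => f (alt T)) := by
  have hchain : ∀ T ⊆ E,
      f ∅ + ∑ i ∈ E, (if i ∈ alt T then marginalBelow f i T else 0) ≤ f (alt T) := by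
    intro T hT
    rw [sum_ite_mem, inter_eq_right.2 ((halt T).trans hT)]
    linarith [sum_marginalBelow_le_of_subset hsub (halt T)]
  have hterms := sum_le_sum fun i hi =>
    mul_prodMean_marginalBelow_le hq hmono hsub halt halt_mono hi (hbal i hi)
  have hmean := prodMean_mono hq hchain
  rw [prodMean_add, prodMean_const, prodMean_sum] at hmean
  rw [prodMean_eq_add_sum_marginalBelow, mul_add, mul_sum]
  linarith [mul_nonneg (sub_nonneg.2 hρ) hf₀]

end Submodular

section Overflow

variable {ι : Type*} {w : ι → ℝ} {c : ℝ}

def fits (w : ι → ℝ) (c : ℝ) (T : Finset ι) : Prop :=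
  c + ∑ i ∈ T.filter (fun i' => c ≤ w i'), w i ≤ 1

lemma fits.subset (hw : ∀ i, 0 ≤ w i) {A B : Finset ι} (hB : fits w c B) (hAB : A ⊆ B) :
    fits w c A :=
  le_trans (add_le_add le_rfl (sum_le_sum_of_subset_of_nonneg (filter_subset_filter _ hAB)
    fun i _ _ => hw i)) hB

lemma fits_of_card_le_one (hc : c ≤ 1) {T : Finset ι} (hsmall : ∀ b ∈ T, w b ≤ 1 / 2)
    (hcard : #(T.filter (fun b => c ≤ w b)) ≤ 1) : fits w c T := by
  unfold fits
  rcases (T.filter (fun b => c ≤ w b)).eq_empty_or_nonempty with hM | ⟨b, hb⟩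
  · simpa [hM] using hc
  · rw [eq_singleton_iff_unique_mem.2 ⟨hb, fun a ha => card_le_one.1 hcard a ha b hb⟩,
      sum_singleton]
    obtain ⟨hbT, hcb⟩ := mem_filter.1 hb
    linarith [hsmall b hbT]

variable [DecidableEq ι] {q : ι → ℝ} {E : Finset ι}

lemma one_sub_div_le_prodMean_fits (hq : ∀ i, q i ∈ Set.Icc (0:ℝ) 1) (hw : ∀ i, 0 ≤ w i)
    (hc : c < 1) :
    1 - (∑ i ∈ E, q i * w i) / (1 - c) ≤ prodMean q E (fun T => if fits w c T then 1 else 0) := by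
  set Z : Finset ι → ℝ := fun T => ∑ i ∈ T, if c ≤ w i then w i else 0
  have hZ₀ : ∀ T, 0 ≤ Z T := fun T => sum_nonneg fun i _ => by split_ifs <;> simp [hw i]
  have hmarkov : ∀ T ⊆ E, 1 - (1 - c)⁻¹ * Z T ≤ if fits w c T then 1 else 0 := by
    intro T _
    have hZ : Z T = ∑ i ∈ T.filter (fun i' => c ≤ w i'), w i := (sum_filter _ _).symm
    split_ifs with hfit
    · linarith [mul_nonneg (inv_nonneg.2 (sub_nonneg.2 hc.le)) (hZ₀ T)]
    · rw [sub_nonpos, ← div_eq_inv_mul, one_le_div (sub_pos.2 hc)]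
      unfold fits at hfit
      linarith
  have hEZ : prodMean q E Z ≤ ∑ i ∈ E, q i * w i := by
    rw [prodMean_sum_mem]
    exact sum_le_sum fun i _ => mul_le_mul_of_nonneg_left
      (by split_ifs <;> simp [hw i]) (hq i).1
  have hmean := prodMean_mono hq hmarkov
  rw [prodMean_sub, prodMean_const, prodMean_const_mul] at hmean
  rw [div_eq_inv_mul]
  nlinarith [inv_nonneg.2 (sub_nonneg.2 hc.le)]

/-- An item that does not fit sees a big item, or two items of size at least its own. -/
lemma one_sub_le_indicator_fits (hc : c ≤ 1) {T : Finset ι} (hT : T ⊆ E) :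
    1 - ∑ b ∈ E.filter (fun b => 1 / 2 < w b), (if b ∈ T then 1 else 0)
      - 1 / 2 * ∑ p ∈ (E.filter (fun b => c ≤ w b)).offDiag,
          (if p.1 ∈ T ∧ p.2 ∈ T then 1 else 0)
      ≤ if fits w c T then (1:ℝ) else 0 := by
  set big := ∑ b ∈ E.filter (fun b => 1 / 2 < w b), (if b ∈ T then (1:ℝ) else 0)
  set pairs := ∑ p ∈ (E.filter (fun b => c ≤ w b)).offDiag,
    (if p.1 ∈ T ∧ p.2 ∈ T then (1:ℝ) else 0)
  have hbig₀ : 0 ≤ big := sum_nonneg fun _ _ => by split_ifs <;> norm_num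
  have hpairs₀ : 0 ≤ pairs := sum_nonneg fun _ _ => by split_ifs <;> norm_num
  split_ifs with hfit
  · linarith
  have hcases : (∃ b ∈ T, 1 / 2 < w b) ∨ 1 < #(T.filter (fun b => c ≤ w b)) := by
    by_contra! h
    exact hfit (fits_of_card_le_one hc h.1 h.2)
  rcases hcases with ⟨b, hbT, hb⟩ | hcard
  · have : 1 ≤ big := by
      have hbE : b ∈ E.filter (fun b => 1 / 2 < w b) := mem_filter.2 ⟨hT hbT, hb⟩
      have := single_le_sum (f := fun b => if b ∈ T then (1:ℝ) else 0)
        (fun _ _ => by split_ifs <;> norm_num) hbE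
      rwa [if_pos hbT] at this
    linarith
  · obtain ⟨a, ha, b, hb, hab⟩ := one_lt_card.1 hcard
    obtain ⟨haT, hca⟩ := mem_filter.1 ha
    obtain ⟨hbT, hcb⟩ := mem_filter.1 hb
    have hsub : {(a, b), (b, a)} ⊆ (E.filter (fun b => c ≤ w b)).offDiag := by
      intro p hp
      rcases mem_insert.1 hp with rfl | hp
      · exact mem_offDiag.2 ⟨mem_filter.2 ⟨hT haT, hca⟩, mem_filter.2 ⟨hT hbT, hcb⟩, hab⟩
      · rw [mem_singleton.1 hp]
        exact mem_offDiag.2 ⟨mem_filter.2 ⟨hT hbT, hcb⟩, mem_filter.2 ⟨hT haT, hca⟩, hab.symm⟩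
    have : 2 ≤ pairs := by
      calc (2:ℝ) = ∑ p ∈ {(a, b), (b, a)}, (if p.1 ∈ T ∧ p.2 ∈ T then (1:ℝ) else 0) := by
            rw [sum_pair (by simp [hab])]
            norm_num [haT, hbT]
        _ ≤ pairs := sum_le_sum_of_subset_of_nonneg hsub fun _ _ _ => by split_ifs <;> norm_num
    linarith

lemma one_sub_sub_le_prodMean_fits (hq : ∀ i, q i ∈ Set.Icc (0:ℝ) 1) (hc : c ≤ 1) :
    1 - ∑ b ∈ E.filter (fun b => 1 / 2 < w b), q b
      - (∑ b ∈ E.filter (fun b => c ≤ w b), q b) ^ 2 / 2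
      ≤ prodMean q E (fun T => if fits w c T then 1 else 0) := by
  set M := E.filter (fun b => c ≤ w b)
  have hM : ∑ p ∈ M.offDiag, q p.1 * q p.2 ≤ (∑ b ∈ M, q b) ^ 2 := by
    rw [sq, sum_mul_sum, ← sum_product']
    exact sum_le_sum_of_subset_of_nonneg
      (fun p hp => mem_product.2 ⟨(mem_offDiag.1 hp).1, (mem_offDiag.1 hp).2.1⟩)
      fun p _ _ => mul_nonneg (hq p.1).1 (hq p.2).1
  have hmean := prodMean_mono hq fun T hT => one_sub_le_indicator_fits (w := w) (E := E) hc hT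
  rw [prodMean_sub, prodMean_sub, prodMean_const, prodMean_const_mul, prodMean_sum,
    prodMean_sum] at hmean
  rw [sum_congr rfl fun b hb => prodMean_indicator_mem (mem_filter.1 hb).1,
    sum_congr rfl fun p hp => prodMean_indicator_pair (mem_filter.1 (mem_offDiag.1 hp).1).1
      (mem_filter.1 (mem_offDiag.1 hp).2.1).1 (mem_offDiag.1 hp).2.2] at hmean
  linarith

/-- Markov's inequality handles items of size at most `ε / (1 + ε)`; for larger items an
overflow needs a big item or a pair of items of size at least `ε / 2`. -/
theorem one_sub_mul_le_prodMean_fits (hq : ∀ i, q i ∈ Set.Icc (0:ℝ) 1) (hw : ∀ i, 0 ≤ w i)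
    (hc₁ : c ≤ 1) {t ε : ℝ} (hload : ∑ i ∈ E, q i * w i ≤ t)
    (hbig : ∑ i ∈ E.filter (fun i => 1 / 2 < w i), q i ≤ t)
    (hε₀ : 0 < ε) (hε₁ : ε ≤ 1) (hε₃ : ε ^ 3 = 2 * t) :
    1 - t * (1 + ε) ≤ prodMean q E (fun T => if fits w c T then 1 else 0) := by
  have ht : 0 < t := by nlinarith [pow_pos hε₀ 3]
  by_cases hsmall : c * (1 + ε) ≤ ε
  · have hc : c < 1 := by nlinarith
    refine le_trans ?_ (one_sub_div_le_prodMean_fits hq hw hc)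
    have : (∑ i ∈ E, q i * w i) / (1 - c) ≤ t * (1 + ε) := by
      rw [div_le_iff₀ (sub_pos.2 hc)]
      nlinarith
    linarith
  · replace hsmall := not_le.1 hsmall
    refine le_trans ?_ (one_sub_sub_le_prodMean_fits hq hc₁)
    set S := ∑ b ∈ E.filter (fun b => c ≤ w b), q b
    have hS₀ : 0 ≤ S := sum_nonneg fun b _ => (hq b).1
    have hcS : c * S ≤ t := by
      calc c * S ≤ ∑ b ∈ E.filter (fun b => c ≤ w b), q b * w b := by
            rw [mul_sum]
            exact sum_le_sum fun b hb => by
              rw [mul_comm]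
              exact mul_le_mul_of_nonneg_left (mem_filter.1 hb).2 (hq b).1
        _ ≤ ∑ b ∈ E, q b * w b := sum_le_sum_of_subset_of_nonneg (filter_subset _ _)
            fun b _ _ => mul_nonneg (hq b).1 (hw b)
        _ ≤ t := hload
    have hεS : ε * S ≤ 2 * t := by nlinarith
    have hS : S ^ 2 / 2 ≤ t * ε := by
      have hsq : (ε * S) ^ 2 ≤ (2 * t) ^ 2 := pow_le_pow_left₀ (by positivity) hεS 2
      have : ε ^ 3 * S ^ 2 ≤ 4 * t ^ 2 * ε := by nlinarith [mul_le_mul_of_nonneg_left hsq hε₀.le]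
      rw [hε₃] at this
      nlinarith
    linarith

end Overflow

section Alteration

variable {n m : ℕ} {s : Fin n → Fin m → ℝ}

theorem sum_altSet'_le_one (hs : ∀ i j, 0 ≤ s i j) (T : Finset (Fin n)) (j : Fin m) :
    ∑ i ∈ altSet' s T, s i j ≤ 1 := by
  rw [← sum_filter_of_ne (p := fun i => 0 < s i j) fun i _ h => (hs i j).lt_of_ne' h]
  rcases ((altSet' s T).filter fun i => 0 < s i j).eq_empty_or_nonempty with hP | hP
  · rw [hP, sum_empty]
    exact zero_le_one
  obtain ⟨i₀, hi₀, hmin⟩ := exists_min_image _ (fun i => s i j) hP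
  obtain ⟨hi₀T, hi₀j⟩ := mem_filter.1 hi₀
  refine le_trans (sum_le_sum_of_subset_of_nonneg (fun i hi => ?_) fun i _ _ => hs i j)
    ((mem_filter.1 hi₀T).2 j hi₀j)
  exact mem_filter.2 ⟨filter_subset _ _ (mem_filter.1 hi).1, hmin i hi⟩

lemma mem_altSet'_insert_iff {i : Fin n} {T : Finset (Fin n)} (hiT : i ∉ T) :
    i ∈ altSet' s (insert i T) ↔ ∀ j, 0 < s i j → fits (fun i' => s i' j) (s i j) T := by
  have hsum : ∀ j, ∑ i' ∈ (insert i T).filter (fun i'' => s i j ≤ s i'' j), s i' j =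
      s i j + ∑ i' ∈ T.filter (fun i'' => s i j ≤ s i'' j), s i' j := fun j => by
    rw [filter_insert, if_pos le_rfl, sum_insert fun h => hiT (mem_filter.1 h).1]
  simp only [altSet', mem_filter, mem_insert_self, true_and, hsum, fits]

lemma mem_altSet'_insert_of_subset (hs : ∀ i j, 0 ≤ s i j) (i : Fin n)
    ⦃A B : Finset (Fin n)⦄ (hAB : A ⊆ B) (hB : i ∈ altSet' s (insert i B)) :
    i ∈ altSet' s (insert i A) := by
  rw [altSet', mem_filter] at hB ⊢
  refine ⟨mem_insert_self i A, fun j hj => le_trans ?_ (hB.2 j hj)⟩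
  exact sum_le_sum_of_subset_of_nonneg (filter_subset_filter _ (insert_subset_insert i hAB))
    fun y _ _ => hs y j

theorem pow_le_prodMean_mem_altSet' {q : Fin n → ℝ} {k : ℕ} (hq : ∀ i, q i ∈ Set.Icc (0:ℝ) 1)
    (hs : ∀ i j, s i j ∈ Set.Icc (0:ℝ) 1) {i : Fin n}
    (hsparse : #(univ.filter fun j => 0 < s i j) ≤ k) {t ε : ℝ}
    (hload : ∀ j, ∑ i', q i' * s i' j ≤ t)
    (hbig : ∀ j, ∑ i' ∈ univ.filter (fun i' => 1 / 2 < s i' j), q i' ≤ t)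
    (hε₀ : 0 < ε) (hε₁ : ε ≤ 1) (hε₃ : ε ^ 3 = 2 * t) :
    (1 - t * (1 + ε)) ^ k ≤
      prodMean q (univ.erase i) (fun T => if i ∈ altSet' s (insert i T) then 1 else 0) := by
  set N := univ.filter fun j => 0 < s i j
  set fitsInd : Fin m → Finset (Fin n) → ℝ :=
    fun j T => if fits (fun i' => s i' j) (s i j) T then 1 else 0
  have hδ₀ : 0 ≤ 1 - t * (1 + ε) := by nlinarith [pow_le_one₀ hε₀.le hε₁ (n := 3)]
  have hδ₁ : 1 - t * (1 + ε) ≤ 1 := by nlinarith [pow_pos hε₀ 3]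
  have hfits : ∀ j ∈ N, 1 - t * (1 + ε) ≤ prodMean q (univ.erase i) (fitsInd j) := fun j _ =>
    one_sub_mul_le_prodMean_fits hq (fun i' => (hs i' j).1) (hs i j).2
      ((sum_le_sum_of_subset_of_nonneg (erase_subset i univ)
        fun i' _ _ => mul_nonneg (hq i').1 (hs i' j).1).trans (hload j))
      ((sum_le_sum_of_subset_of_nonneg (filter_subset_filter _ (erase_subset i univ))
        fun i' _ _ => (hq i').1).trans (hbig j)) hε₀ hε₁ hε₃
  have hkeep : ∀ T ⊆ univ.erase i,
      (if i ∈ altSet' s (insert i T) then 1 else 0) = ∏ j ∈ N, fitsInd j T := fun T hT => by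
    simp only [fitsInd, prod_boole, N, mem_filter, mem_univ, true_and,
      mem_altSet'_insert_iff fun h => notMem_erase i univ (hT h)]
  calc (1 - t * (1 + ε)) ^ k ≤ (1 - t * (1 + ε)) ^ #N := pow_le_pow_of_le_one hδ₀ hδ₁ hsparse
    _ = ∏ j ∈ N, (1 - t * (1 + ε)) := (prod_const _).symm
    _ ≤ ∏ j ∈ N, prodMean q (univ.erase i) (fitsInd j) := prod_le_prod (fun _ _ => hδ₀) hfits
    _ ≤ prodMean q (univ.erase i) (fun T => ∏ j ∈ N, fitsInd j T) :=
      prod_prodMean_le_of_antitone hq _ N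
        (fun j _ => antitone_indicator fun A B hAB => (fits.subset (fun i' => (hs i' j).1) · hAB))
        fun j _ T => by simp only [fitsInd]; split_ifs <;> norm_num
    _ = _ := (prodMean_congr hkeep).symm

theorem mul_prodMean_le_prodMean_altSet' {k : ℕ} {f : Finset (Fin n) → ℝ}
    (hmono : ∀ A B : Finset (Fin n), A ⊆ B → f A ≤ f B)
    (hsub : ∀ A B : Finset (Fin n), f (A ∪ B) + f (A ∩ B) ≤ f A + f B) (hf₀ : 0 ≤ f ∅)
    (hs : ∀ i j, s i j ∈ Set.Icc (0:ℝ) 1)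
    (hsparse : ∀ i, #(univ.filter fun j => 0 < s i j) ≤ k)
    {x : Fin n → ℝ} (hx : ∀ i, x i ∈ Set.Icc (0:ℝ) 1) (hLP : ∀ j, ∑ i, s i j * x i ≤ 1)
    (hLPbig : ∀ j, ∑ i ∈ univ.filter (fun i => 1 / 2 < s i j), x i ≤ 1)
    {t ε : ℝ} (ht : t ∈ Set.Icc (0:ℝ) 1) (hε₀ : 0 < ε) (hε₁ : ε ≤ 1) (hε₃ : ε ^ 3 = 2 * t) :
    (1 - t * (1 + ε)) ^ k * (t * prodMean x univ f) ≤
      prodMean (fun i => t * x i) univ (fun T => f (altSet' s T)) := by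
  have hq : ∀ i, t * x i ∈ Set.Icc (0:ℝ) 1 := fun i =>
    ⟨mul_nonneg ht.1 (hx i).1, mul_le_one₀ ht.2 (hx i).1 (hx i).2⟩
  have hload : ∀ j, ∑ i, t * x i * s i j ≤ t := fun j =>
    calc ∑ i, t * x i * s i j = t * ∑ i, s i j * x i := by
          rw [mul_sum]
          exact sum_congr rfl fun i _ => by ring
      _ ≤ t := mul_le_of_le_one_right ht.1 (hLP j)
  have hbig : ∀ j, ∑ i ∈ univ.filter (fun i => 1 / 2 < s i j), t * x i ≤ t := fun j => by
    rw [← mul_sum]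
    exact mul_le_of_le_one_right ht.1 (hLPbig j)
  have hδ₀ : 0 ≤ 1 - t * (1 + ε) := by nlinarith [pow_le_one₀ hε₀.le hε₁ (n := 3)]
  have hδ₁ : (1 - t * (1 + ε)) ^ k ≤ 1 := pow_le_one₀ hδ₀ (by nlinarith [ht.1])
  calc (1 - t * (1 + ε)) ^ k * (t * prodMean x univ f)
      ≤ (1 - t * (1 + ε)) ^ k * prodMean (fun i => t * x i) univ f := by
        refine mul_le_mul_of_nonneg_left ?_ (pow_nonneg hδ₀ k)
        linarith [mul_prodMean_add_le_prodMean_mul hsub hx ht univ,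
          mul_nonneg (sub_nonneg.2 ht.2) hf₀]
    _ ≤ _ := mul_prodMean_le_prodMean_alt (alt := altSet' s) hq hmono hsub hf₀
        (fun T => filter_subset _ T) (mem_altSet'_insert_of_subset fun i j => (hs i j).1) hδ₁
        fun i _ => pow_le_prodMean_mem_altSet' hq hs (hsparse i) hload hbig hε₀ hε₁ hε₃

end Alteration

lemma exV_eq_prodMean {n : ℕ} (q : Fin n → ℝ) (g : Finset (Fin n) → ℝ) :
    exV q g = prodMean q univ g := by
  simp only [exV, prodMean, prodP, powerset_univ, compl_eq_univ_sdiff]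

lemma rpow_one_div_three_pow_three {a : ℝ} (ha : 0 ≤ a) : (a ^ ((1:ℝ) / 3)) ^ 3 = a := by
  rw [one_div, ← Real.rpow_natCast, ← Real.rpow_mul ha]
  norm_num

theorem submodular_rounding_general (n m k : ℕ) (f : Finset (Fin n) → ℝ)
    (hmono : ∀ A B : Finset (Fin n), A ⊆ B → f A ≤ f B)
    (hsub : ∀ A B : Finset (Fin n), f (A ∪ B) + f (A ∩ B) ≤ f A + f B)
    (hnn : ∀ A : Finset (Fin n), 0 ≤ f A)
    (s : Fin n → Fin m → ℝ)
    (hs : ∀ i j, s i j ∈ Set.Icc (0:ℝ) 1)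
    (hsparse : ∀ i, ((univ : Finset (Fin m)).filter (fun j => 0 < s i j)).card ≤ k)
    (x : Fin n → ℝ) (hx : ∀ i, x i ∈ Set.Icc (0:ℝ) 1)
    (hLP : ∀ j, ∑ i, s i j * x i ≤ 1)
    (hLPbig : ∀ j, ∑ i ∈ univ.filter (fun i => 1/2 < s i j), x i ≤ 1)
    (α : ℝ) (hαk : 2 ≤ α * k)
    (q : Fin n → ℝ) (hq : ∀ i, q i = x i / (α * k)) :
    (∀ T : Finset (Fin n), ∀ j : Fin m, ∑ i ∈ altSet' s T, s i j ≤ 1) ∧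
    exV q (fun T => f (altSet' s T))
      ≥ (1 / (α * k)) * (1 - (1 / (α * k)) * (1 + (2 / (α * k)) ^ ((1:ℝ)/3)))^k
          * exV x f := by
  refine ⟨sum_altSet'_le_one fun i j => (hs i j).1, ?_⟩
  have hαk₀ : 0 < α * k := by linarith
  have ht : 1 / (α * k) ∈ Set.Icc (0:ℝ) 1 := ⟨by positivity, (div_le_one hαk₀).2 (by linarith)⟩
  have hε₃ : ((2 / (α * k)) ^ ((1:ℝ) / 3)) ^ 3 = 2 * (1 / (α * k)) := by
    rw [rpow_one_div_three_pow_three (by positivity)]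
    ring
  obtain rfl : q = fun i => 1 / (α * k) * x i := funext fun i => by rw [hq]; ring
  rw [ge_iff_le, exV_eq_prodMean, exV_eq_prodMean, mul_comm _ (_ ^ k), mul_assoc]
  exact mul_prodMean_le_prodMean_altSet' hmono hsub (hnn ∅) hs hsparse hx hLP hLPbig ht
    (by positivity) (Real.rpow_le_one (by positivity) ((div_le_one hαk₀).2 hαk) (by norm_num))
    hε₃

/-- for a nonnegative monotone submodular `f` and `x` feasible for
the strengthened LP, sampling with probabilities `x i/(αk)` and altering yields
an always-feasible set `S'` with
`E[f(S')] ≥ (1/(αk))·(1 - (1/(αk))(1 + (2/(αk))^{1/3}))^k · F(x)`. -/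
theorem submodular_rounding (n m k : ℕ) (f : Finset (Fin n) → ℝ)
    (hmono : ∀ A B : Finset (Fin n), A ⊆ B → f A ≤ f B)
    (hsub : ∀ A B : Finset (Fin n), f (A ∪ B) + f (A ∩ B) ≤ f A + f B)
    (hnn : ∀ A : Finset (Fin n), 0 ≤ f A)
    (s : Fin n → Fin m → ℝ)
    (hs : ∀ i j, s i j ∈ Set.Icc (0:ℝ) 1)
    (hsparse : ∀ i, ((univ : Finset (Fin m)).filter (fun j => 0 < s i j)).card ≤ k)
    (x : Fin n → ℝ) (hx : ∀ i, x i ∈ Set.Icc (0:ℝ) 1)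
    (hLP : ∀ j, ∑ i, s i j * x i ≤ 1)
    (hLPbig : ∀ j, ∑ i ∈ univ.filter (fun i => 1/2 < s i j), x i ≤ 1)
    (α : ℝ) (hα : 0 < α) (hαk : 2 ≤ α * k)
    (q : Fin n → ℝ) (hq : ∀ i, q i = x i / (α * k)) :
    (∀ T : Finset (Fin n), ∀ j : Fin m, ∑ i ∈ altSet' s T, s i j ≤ 1) ∧
    exV q (fun T => f (altSet' s T))
      ≥ (1 / (α * k)) * (1 - (1 / (α * k)) * (1 + (2 / (α * k)) ^ ((1:ℝ)/3)))^k
          * exV x f :=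
  submodular_rounding_general n m k f hmono hsub hnn s hs hsparse x hx hLP hLPbig α hαk q hq
end

section
/- Let B ≥ 1, t = ⌊B⌋, and n > t. Consider the packing instance with item set [n] and one constraint for each (t+1)-element subset C ⊆ [n], with sizes s_{i,C} = 1 if i ∈ C and 0 otherwise, capacity B for every constraint, and all weights equal to 1. Then: (a) each item participates in exactly C(n−1, t) constraints, so the instance is k-column-sparse for k = C(n−1, t); (b) the fractional solution x_i = 1/2 for all i is LP-feasible, so the LP optimum is at least n/2; and (c) every feasible 0-1 solution contains at most t items. Consequently the integrality gap of the natural LP relaxation is at least n/(2t) ≥ (1/(2e)) · k^{1/⌊B⌋}. -/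
open Finset
open scoped Classical BigOperators

/-- integrality gap instance for general slack `B ≥ 1`.
Items are `[n]`, there is one constraint per `(t+1)`-subset `C` (with
`t = ⌊B⌋ < n`), sizes `s_{i,C} = 1` if `i ∈ C` and `0` otherwise, capacity `B`,
all weights `1`.  Then: (a) each item participates in exactly `C(n-1,t)`
constraints (so the instance is `k`-column sparse for `k = C(n-1,t)`);
(b) `x ≡ 1/2` is LP-feasible and has total value `n/2`; (c) every feasible
0-1 solution has at most `t` items; and (d) the resulting integrality gap
`n/(2t)` is at least `(1/(2e))·k^{1/⌊B⌋}`. -/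
theorem slack_integrality_gap (B : ℝ) (hB : 1 ≤ B) (t : ℕ) (ht : t = ⌊B⌋₊)
    (n : ℕ) (hn : t < n) (k : ℕ) (hk : k = (n - 1).choose t) :
    -- (a) each item participates in exactly C(n-1,t) constraints
    (∀ i : Fin n,
      ((univ : Finset (Finset (Fin n))).filter
        (fun C => C.card = t + 1 ∧ i ∈ C)).card = (n - 1).choose t) ∧
    -- (b) x ≡ 1/2 is LP-feasible ...
    (∀ C : Finset (Fin n), C.card = t + 1 →
      ∑ i : Fin n, (if i ∈ C then (1:ℝ) else 0) * (1/2) ≤ B) ∧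
    -- ... with total value n/2
    ((∑ _i : Fin n, (1/2 : ℝ)) = n / 2) ∧
    -- (c) every feasible 0-1 solution has at most t items
    (∀ S' : Finset (Fin n),
      (∀ C : Finset (Fin n), C.card = t + 1 →
        ∑ i ∈ S', (if i ∈ C then (1:ℝ) else 0) ≤ B) → S'.card ≤ t) ∧
    -- (d) the integrality gap is at least (1/(2e))·k^{1/⌊B⌋}
    (n : ℝ) / (2 * t) ≥ (1 / (2 * Real.exp 1)) * (k : ℝ) ^ ((1:ℝ) / (t : ℝ)) := by
  have hB0 : (0:ℝ) ≤ B := le_trans zero_le_one hB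
  have htB : (t : ℝ) ≤ B := by rw [ht]; exact Nat.floor_le hB0
  have hBt1 : B < (t : ℝ) + 1 := by
    rw [ht]; exact_mod_cast Nat.lt_floor_add_one B
  have ht1 : 1 ≤ t := by rw [ht]; exact (Nat.one_le_floor_iff _).mpr hB
  refine ⟨?_, ?_, ?_, ?_, ?_⟩
  · -- (a)
    intro i
    have himg : ((univ : Finset (Finset (Fin n))).filter
        (fun C => C.card = t + 1 ∧ i ∈ C)) =
        (((univ : Finset (Fin n)).erase i).powersetCard t).image (insert i) := by
      ext C
      simp only [mem_filter, mem_univ, true_and, mem_image, mem_powersetCard]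
      constructor
      · rintro ⟨hcard, hiC⟩
        refine ⟨C.erase i, ⟨fun x hx => ?_, ?_⟩, by rw [insert_erase hiC]⟩
        · exact mem_erase.mpr ⟨(mem_erase.mp hx).1, mem_univ _⟩
        · rw [card_erase_of_mem hiC, hcard]; rfl
      · rintro ⟨A, ⟨hA, hAcard⟩, rfl⟩
        have hiA : i ∉ A := fun h => (mem_erase.mp (hA h)).1 rfl
        exact ⟨by rw [card_insert_of_notMem hiA, hAcard], mem_insert_self _ _⟩
    rw [himg, card_image_of_injOn, card_powersetCard, card_erase_of_mem (mem_univ i),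
      card_univ, Fintype.card_fin]
    intro A hA A' hA' hEq
    have hiA : i ∉ A := fun h =>
      (mem_erase.mp ((mem_powersetCard.mp (by simpa using hA)).1 h)).1 rfl
    have hiA' : i ∉ A' := fun h =>
      (mem_erase.mp ((mem_powersetCard.mp (by simpa using hA')).1 h)).1 rfl
    have := congrArg (fun s => Finset.erase s i) hEq
    simpa [erase_insert hiA, erase_insert hiA'] using this
  · -- (b)
    intro C hC
    have hsum : ∑ i : Fin n, (if i ∈ C then (1:ℝ) else 0) * (1/2)
        = (C.card : ℝ) * (1/2) := by
      simp only [ite_mul, zero_mul, one_mul]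
      rw [Finset.sum_ite_mem, Finset.univ_inter, Finset.sum_const]
      simp
    rw [hsum, hC]
    push_cast
    linarith
  · -- value
    rw [Finset.sum_const, card_univ, Fintype.card_fin]
    push_cast
    ring
  · -- (c)
    intro S' hS'
    by_contra hlt
    push_neg at hlt
    obtain ⟨C, hCS, hCcard⟩ := Finset.exists_subset_card_eq (show t + 1 ≤ S'.card from hlt)
    have := hS' C hCcard
    have hsum : ∑ i ∈ S', (if i ∈ C then (1:ℝ) else 0) = (C.card : ℝ) := by
      rw [Finset.sum_ite_mem, Finset.inter_eq_right.mpr hCS, Finset.sum_const]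
      simp
    rw [hsum, hCcard] at this
    push_cast at this
    linarith
  · -- (d)
    have ht0 : (0:ℝ) < t := by exact_mod_cast ht1
    have hnn : 0 < n := (Nat.zero_le t).trans_lt hn
    have hn0 : (0:ℝ) < n := by exact_mod_cast hnn
    have he : (0:ℝ) < Real.exp 1 := Real.exp_pos 1
    have hent : (0:ℝ) < Real.exp 1 * n / t := by positivity
    have hfac : (0:ℝ) < (Nat.factorial t : ℝ) := by exact_mod_cast t.factorial_pos
    -- key bound: k ≤ (e*n/t)^t
    have hkey : (k : ℝ) ≤ (Real.exp 1 * n / t) ^ t := by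
      have h1 : (k : ℝ) ≤ (n : ℝ) ^ t / (Nat.factorial t : ℝ) := by
        calc (k : ℝ) ≤ ((n-1 : ℕ) : ℝ) ^ t / (Nat.factorial t : ℝ) := by
              rw [hk]; exact_mod_cast Nat.choose_le_pow_div t (n-1)
          _ ≤ (n : ℝ) ^ t / (Nat.factorial t : ℝ) := by
              gcongr
              exact_mod_cast Nat.sub_le n 1
      have h2 : (t : ℝ) ^ t ≤ Real.exp t * (Nat.factorial t : ℝ) := by
        have := Real.pow_div_factorial_le_exp (x := (t:ℝ)) ht0.le t
        rw [div_le_iff₀ hfac] at this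
        linarith
      have h3 : (n : ℝ) ^ t / (Nat.factorial t : ℝ) ≤ (Real.exp 1 * n / t) ^ t := by
        have heq : (Real.exp 1 * n / t) ^ t = Real.exp t * (n:ℝ)^t / (t:ℝ)^t := by
          rw [div_pow, mul_pow, Real.exp_one_pow]
        rw [heq, div_le_div_iff₀ hfac (by positivity)]
        calc (n:ℝ)^t * (t:ℝ)^t = (t:ℝ)^t * (n:ℝ)^t := by ring
          _ ≤ (Real.exp t * (Nat.factorial t : ℝ)) * (n:ℝ)^t :=
              mul_le_mul_of_nonneg_right h2 (by positivity)
          _ = Real.exp t * (n:ℝ)^t * (Nat.factorial t : ℝ) := by ring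
      linarith
    have hrp : (k : ℝ) ^ ((1:ℝ) / (t : ℝ)) ≤ Real.exp 1 * n / t := by
      have h4 : (k : ℝ) ^ ((1:ℝ) / (t : ℝ)) ≤
          ((Real.exp 1 * n / t) ^ t) ^ ((1:ℝ) / (t : ℝ)) :=
        Real.rpow_le_rpow (by positivity) hkey (by positivity)
      calc (k : ℝ) ^ ((1:ℝ) / (t : ℝ))
          ≤ ((Real.exp 1 * n / t) ^ t) ^ ((1:ℝ)/(t:ℝ)) := h4
        _ = (Real.exp 1 * n / t) ^ ((t:ℝ) * ((1:ℝ)/(t:ℝ))) := by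
            rw [← Real.rpow_natCast (Real.exp 1 * n / t) t, ← Real.rpow_mul hent.le]
        _ = Real.exp 1 * n / t := by
            rw [mul_one_div, div_self (ne_of_gt ht0), Real.rpow_one]
    have : (1 / (2 * Real.exp 1)) * (k : ℝ) ^ ((1:ℝ) / (t : ℝ))
        ≤ (1 / (2 * Real.exp 1)) * (Real.exp 1 * n / t) :=
      mul_le_mul_of_nonneg_left hrp (by positivity)
    have heq : (1 / (2 * Real.exp 1)) * (Real.exp 1 * n / t) = (n : ℝ) / (2 * t) := by
      field_simp
    rw [ge_iff_le]
    linarith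
end
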